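/- Self-duality criterion: in the single-variable case with t = 1, if f g ≡ λ L′ (mod L) for some λ ∈ F_q^* where L(x) = ∏_{s∈S}(x−s), and f = g with 2·deg g = n, then GRS(S, deg g, g) is self-dual. -/

import Mathlib

/-!
Write `L = ∏ᵢ (X - sᵢ)`. For a polynomial `p` with `deg p < n - 1`, the top coefficient of its
Lagrange interpolant gives `∑ᵢ p(sᵢ) / L′(sᵢ) = 0`. Evaluating the congruence at the nodes
gives `g(sᵢ)² = λ L′(sᵢ)`, so the dot product of two codewords `(h₁(sᵢ)/g(sᵢ))ᵢ` and
`(h₂(sᵢ)/g(sᵢ))ᵢ` is `λ⁻¹ ∑ᵢ (h₁h₂)(sᵢ) / L′(sᵢ)`. Here `deg (h₁h₂) ≤ n - 2`, so this sum is `0`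
and the code is self-orthogonal. It has dimension `deg g = n/2`, so it equals its dual.
-/

/-- The generalized Reed–Solomon code `GRS(S,k,g) = {(h(sᵢ)/g(sᵢ))ᵢ : deg h < k}`. -/
def GRSset (F : Type*) [Field F] (n k : ℕ) (s : Fin n → F) (g : Polynomial F) :
    Set (Fin n → F) :=
  {c | ∃ h : Polynomial F, h.degree < (k : WithBot ℕ) ∧
      ∀ i, c i = h.eval (s i) / g.eval (s i)}

open Polynomial Finset Lagrange Module

section

variable {F : Type*} [Field F]

theorem Lagrange.sum_eval_div_eval_derivative_nodal_eq_zero {ι : Type*} {s : Finset ι}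
    {v : ι → F} (hvs : Set.InjOn v s) {p : F[X]} (hp : p.degree < ↑(#s - 1)) :
    ∑ i ∈ s, p.eval (v i) / (derivative (nodal s v)).eval (v i) = 0 := by
  classical
  have hcoeff := coeff_eq_sum hvs (hp.trans_le (by exact_mod_cast Nat.sub_le _ _))
  rw [coeff_eq_zero_of_degree_lt hp] at hcoeff
  rw [hcoeff]
  refine sum_congr rfl fun i hi => ?_
  rw [eval_nodal_derivative_eval_node_eq hi, eval_nodal]

theorem Lagrange.eval_eq_of_nodal_dvd_sub {ι : Type*} {s : Finset ι} {v : ι → F}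
    {p q : F[X]} (h : nodal s v ∣ p - q) {i : ι} (hi : i ∈ s) :
    p.eval (v i) = q.eval (v i) := by
  have := eval_dvd (x := v i) h
  rwa [eval_nodal_at_node hi, zero_dvd_iff, eval_sub, sub_eq_zero] at this

theorem Polynomial.degree_mul_lt_of_mem_degreeLT {p q : F[X]} {k : ℕ}
    (hp : p ∈ degreeLT F k) (hq : q ∈ degreeLT F k) : (p * q).degree < ↑(2 * k - 1) := by
  rcases eq_or_ne p 0 with rfl | hp0
  · simp
  rcases eq_or_ne q 0 with rfl | hq0
  · simp
  rw [mem_degreeLT, degree_eq_natDegree hp0, Nat.cast_lt] at hp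
  rw [mem_degreeLT, degree_eq_natDegree hq0, Nat.cast_lt] at hq
  rw [degree_eq_natDegree (mul_ne_zero hp0 hq0), natDegree_mul hp0 hq0, Nat.cast_lt]
  omega

theorem LinearMap.BilinForm.eq_orthogonal_of_le_of_two_mul_finrank {V : Type*}
    [AddCommGroup V] [Module F V] [FiniteDimensional F V] {B : LinearMap.BilinForm F V}
    (hB : B.Nondegenerate) {W : Submodule F V} (hle : W ≤ B.orthogonal W)
    (hdim : 2 * finrank F W = finrank F V) : W = B.orthogonal W :=
  Submodule.eq_of_le_of_finrank_le hle (by rw [finrank_orthogonal hB]; omega)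

section DotProduct

variable {ι : Type*} [Fintype ι]

theorem Matrix.dotProductBilin_nondegenerate :
    (dotProductBilin F F : LinearMap.BilinForm F (ι → F)).Nondegenerate :=
  ⟨fun _ hx => dotProduct_eq_zero_iff.mp hx,
    fun _ hy => dotProduct_eq_zero_iff.mp fun x => by rw [dotProduct_comm]; exact hy x⟩

theorem Matrix.mem_orthogonal_dotProductBilin_iff {C : Submodule F (ι → F)} {w : ι → F} :
    w ∈ LinearMap.BilinForm.orthogonal (dotProductBilin F F) C ↔ ∀ c ∈ C, w ⬝ᵥ c = 0 := by
  simp only [LinearMap.BilinForm.mem_orthogonal_iff, dotProductBilin_apply_apply,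
    dotProduct_comm]

end DotProduct

noncomputable section GRS

variable {ι : Type*} (s : ι → F) (g : F[X])

def grsEval : F[X] →ₗ[F] ι → F :=
  LinearMap.pi fun i => (g.eval (s i))⁻¹ • leval (s i)

@[simp]
theorem grsEval_apply (h : F[X]) (i : ι) : grsEval s g h i = h.eval (s i) / g.eval (s i) := by
  simp [grsEval, div_eq_inv_mul]

def grsCode (k : ℕ) : Submodule F (ι → F) :=
  (degreeLT F k).map (grsEval s g)

theorem GRSset_eq_grsCode {n : ℕ} (s : Fin n → F) (k : ℕ) :
    GRSset F n k s g = grsCode s g k := by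
  ext c
  simp only [GRSset, grsCode, Set.mem_ofPred_eq, SetLike.mem_coe, Submodule.mem_map,
    mem_degreeLT, funext_iff, grsEval_apply, eq_comm]

variable [Fintype ι] {s g}

theorem finrank_grsCode (hs : Function.Injective s) (hg : ∀ i, g.eval (s i) ≠ 0) {k : ℕ}
    (hk : k ≤ Fintype.card ι) : finrank F (grsCode s g k) = k := by
  have hinj : Function.Injective ((grsEval s g).comp (degreeLT F k).subtype) := by
    rw [← LinearMap.ker_eq_bot, LinearMap.ker_eq_bot']
    rintro ⟨h, hh⟩ hzero
    have hroots : ∀ i ∈ (univ : Finset ι), h.eval (s i) = 0 := fun i _ => by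
      simpa [hg i] using congrFun hzero i
    exact Subtype.ext <| eq_zero_of_degree_lt_of_eval_index_eq_zero _ hs.injOn
      ((mem_degreeLT.mp hh).trans_le (by rwa [card_univ, Nat.cast_le])) hroots
  rw [grsCode, ← Submodule.range_subtype (degreeLT F k), ← LinearMap.range_comp,
    LinearMap.finrank_range_of_inj hinj, (degreeLTEquiv F k).finrank_eq, finrank_fin_fun]

theorem grsCode_le_orthogonal (hs : Function.Injective s) {lam : F}
    (hsq : ∀ i, g.eval (s i) * g.eval (s i) = lam * (derivative (nodal univ s)).eval (s i))
    {k : ℕ} (hk : 2 * k ≤ Fintype.card ι) :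
    grsCode s g k ≤ LinearMap.BilinForm.orthogonal (dotProductBilin F F) (grsCode s g k) := by
  rintro _ ⟨h₁, hh₁, rfl⟩
  rw [Matrix.mem_orthogonal_dotProductBilin_iff]
  rintro _ ⟨h₂, hh₂, rfl⟩
  have hdeg : (h₁ * h₂).degree < ↑(#(univ : Finset ι) - 1) :=
    (degree_mul_lt_of_mem_degreeLT hh₁ hh₂).trans_le (by rw [card_univ, Nat.cast_le]; omega)
  calc grsEval s g h₁ ⬝ᵥ grsEval s g h₂
      = lam⁻¹ * ∑ i, (h₁ * h₂).eval (s i) / (derivative (nodal univ s)).eval (s i) := by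
        simp only [dotProduct, grsEval_apply, mul_sum, div_mul_div_comm, hsq, eval_mul]
        refine sum_congr rfl fun i _ => ?_
        rw [mul_comm lam, ← div_div, inv_mul_eq_div]
    _ = 0 := by rw [sum_eval_div_eval_derivative_nodal_eq_zero hs.injOn hdeg, mul_zero]

end GRS

end

theorem stmt_18_general {F : Type*} [Field F] (n : ℕ)
    (s : Fin n → F) (hs : Function.Injective s)
    (g : Polynomial F) (hg : ∀ i, g.eval (s i) ≠ 0)
    (hdeg : 2 * g.natDegree = n)
    (lam : F)
    (hcong : (∏ i, (Polynomial.X - Polynomial.C (s i))) ∣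
      (g * g - Polynomial.C lam *
        Polynomial.derivative (∏ i, (Polynomial.X - Polynomial.C (s i))))) :
    GRSset F n g.natDegree s g =
      {w | ∀ c ∈ GRSset F n g.natDegree s g, ∑ i, w i * c i = 0} := by
  have hsq (i : Fin n) :
      g.eval (s i) * g.eval (s i) = lam * (derivative (nodal univ s)).eval (s i) := by
    simpa [nodal] using eval_eq_of_nodal_dvd_sub hcong (mem_univ i)
  have hself : grsCode s g g.natDegree =
      LinearMap.BilinForm.orthogonal (dotProductBilin F F) (grsCode s g g.natDegree) :=
    LinearMap.BilinForm.eq_orthogonal_of_le_of_two_mul_finrank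
      Matrix.dotProductBilin_nondegenerate (grsCode_le_orthogonal hs hsq (by simp [hdeg]))
      (by rw [finrank_grsCode hs hg (by rw [Fintype.card_fin]; omega), finrank_fin_fun, hdeg])
  rw [GRSset_eq_grsCode]
  ext w
  rw [SetLike.mem_coe, hself, Matrix.mem_orthogonal_dotProductBilin_iff, ← hself]
  rfl

/-- Self-duality criterion (single variable, `t = 1`): if `g·g ≡ λ L′ (mod L)` for
some `λ ∈ F_q^*`, where `L(x) = ∏_{s∈S}(x−s)`, and `2·deg g = n`, then
`GRS(S, deg g, g)` is self-dual. -/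
theorem stmt_18 {F : Type*} [Field F] [Fintype F] (n : ℕ)
    (s : Fin n → F) (hs : Function.Injective s)
    (g : Polynomial F) (hg : ∀ i, g.eval (s i) ≠ 0)
    (hdeg : 2 * g.natDegree = n)
    (lam : F) (hlam : lam ≠ 0)
    (hcong : (∏ i, (Polynomial.X - Polynomial.C (s i))) ∣
      (g * g - Polynomial.C lam *
        Polynomial.derivative (∏ i, (Polynomial.X - Polynomial.C (s i))))) :
    GRSset F n g.natDegree s g =
      {w | ∀ c ∈ GRSset F n g.natDegree s g, ∑ i, w i * c i = 0} :=
  stmt_18_general n s hs g hg hdeg lam hcong
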